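/- arXiv:math/0503396 — 4 statements merged into one kernel-verified Lean document; each statement's English description precedes it below -/
import Mathlib

section
/- For all u₁, u₂ ∈ ℂ, the sl(2) Lax matrix admits the factorization [[u₁ + z∂, −∂], [z²∂ + (u₁−u₂)z, u₂ − z∂]] = [[1,0],[z,1]] · [[u₁−1, −∂],[0, u₂]] · [[1,0],[−z,1]], an identity of 2×2 matrices whose entries are ℂ-linear endomorphisms of ℂ[z], with matrix multiplication computed via operator composition. -/
open Polynomial

/-- Multiplication by `z` on `ℂ[z]`. -/
noncomputable def Zop : Module.End ℂ (Polynomial ℂ) := LinearMap.mulLeft ℂ (X : ℂ[X])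

/-- Differentiation `∂ = d/dz` on `ℂ[z]`. -/
noncomputable def Dop : Module.End ℂ (Polynomial ℂ) := Polynomial.derivative

/-- The `sl(2)` Lax matrix `L(u₁,u₂) = [[u₁ + z∂, −∂], [z²∂ + (u₁−u₂)z, u₂ − z∂]]`. -/
noncomputable def LaxM (u₁ u₂ : ℂ) : Matrix (Fin 2) (Fin 2) (Module.End ℂ (Polynomial ℂ)) :=
  !![u₁ • 1 + Zop * Dop, -Dop;
     Zop * Zop * Dop + (u₁ - u₂) • Zop, u₂ • 1 - Zop * Dop]

/-- Factorization of the `sl(2)` Lax matrix: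
`L(u₁,u₂) = [[1,0],[z,1]] · [[u₁−1, −∂],[0, u₂]] · [[1,0],[−z,1]]`. -/
theorem sl2_lax_factorization (u₁ u₂ : ℂ) :
    LaxM u₁ u₂ =
      !![(1 : Module.End ℂ (Polynomial ℂ)), 0; Zop, 1] *
      !![(u₁ - 1) • 1, -Dop; 0, u₂ • 1] *
      !![(1 : Module.End ℂ (Polynomial ℂ)), 0; -Zop, 1] := by
  rw [LaxM]
  refine Matrix.ext fun i j => ?_
  fin_cases i <;> fin_cases j
  all_goals simp [Matrix.mul_apply, Fin.sum_univ_two, mul_add, add_mul, mul_sub, sub_mul,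
      smul_smul, mul_smul_comm, smul_mul_assoc, mul_assoc]
  all_goals
    apply LinearMap.ext
    intro p
    simp [Zop, Dop, Module.End.mul_apply, derivative_mul, sub_smul, smul_smul]
    ring
end

section
/- For all u₁, u₂, λ ∈ ℂ, the sl(2) Lax matrix L(u₁,u₂) = [[u₁ + z∂, −∂], [z²∂ + (u₁−u₂)z, u₂ − z∂]] satisfies the invariance identity [[1,0],[−λ,1]] · L(u₁,u₂) · [[1,0],[λ,1]] = T_{−λ} L(u₁,u₂) T_{λ}, where T_{λ} is the shift operator (T_{λ}Φ)(z) = Φ(z+λ) and T_{−λ} L T_{λ} means conjugating every matrix entry by the shift operator. -/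
open Polynomial

/-- The shift operator `(T_λ Φ)(z) = Φ(z + λ)`, i.e. the substitution `z ↦ z + λ`. -/
noncomputable def Shift (lam : ℂ) : Module.End ℂ (Polynomial ℂ) :=
  (Polynomial.aeval (X + C lam) : ℂ[X] →ₐ[ℂ] ℂ[X]).toLinearMap

lemma shift_apply (lam : ℂ) (p : ℂ[X]) : Shift lam p = p.comp (X + C lam) := by
  simp [Shift, aeval_def, Polynomial.comp, Polynomial.algebraMap_eq]

/-- `sl(2)`-invariance of the Lax matrix:
`[[1,0],[−λ,1]] · L(u₁,u₂) · [[1,0],[λ,1]] = T_{−λ} L(u₁,u₂) T_{λ}`, where the right-hand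
side conjugates every matrix entry by the shift operator. -/
theorem sl2_lax_invariance (u₁ u₂ lam : ℂ) :
    !![(1 : Module.End ℂ (Polynomial ℂ)), 0; (-lam) • 1, 1] * LaxM u₁ u₂ *
        !![(1 : Module.End ℂ (Polynomial ℂ)), 0; lam • 1, 1]
      = (LaxM u₁ u₂).map (fun A => Shift (-lam) * A * Shift lam) := by
  refine Matrix.ext fun i j => ?_
  refine LinearMap.ext fun p => ?_
  fin_cases i <;> fin_cases j <;>
    · simp only [LaxM, Matrix.mul_apply, Fin.sum_univ_two, Matrix.map_apply,
        Matrix.cons_val', Matrix.cons_val_zero, Matrix.cons_val_one, Matrix.head_cons,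
        Matrix.empty_val', Matrix.cons_val_fin_one, Matrix.head_fin_const]
      simp [Module.End.mul_apply, LinearMap.add_apply, LinearMap.sub_apply, LinearMap.smul_apply,
        shift_apply, Zop, Dop, derivative_comp, mul_comp, add_comp, sub_comp, X_comp, C_comp,
        Polynomial.comp_assoc, Polynomial.smul_eq_C_mul]
      try ring
end

section
/- Let u₁, u₂, v₁, v₂ ∈ ℂ with u₁−u₂, v₁−u₂, u₁−v₂, v₁−v₂ ∉ ℤ_{≤0}. Then the two factorization orders of the sl(2) R-operator coincide: D₂[u₁−u₂, v₁−u₂] ∘ D₁[u₁−v₂, u₁−u₂] = D₁[v₁−v₂, v₁−u₂] ∘ D₂[u₁−v₂, v₁−v₂] as ℂ-linear endomorphisms of ℂ[z₁,z₂], where D₂[α,β](z₁ʲ(z₂−z₁)ᵏ) = (Γ(k+α)/Γ(k+β)) z₁ʲ(z₂−z₁)ᵏ and D₁[α,β](z₂ʲ(z₁−z₂)ᵏ) = (Γ(k+α)/Γ(k+β)) z₂ʲ(z₁−z₂)ᵏ. -/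
/-!
An operator diagonal on the basis `z₂ʲ(z₁−z₂)ᵏ` with eigenvalues `g k` sends `z₁ʲ(z₂−z₁)ᵏ` to
`∑ₛ C(j,s) (-1)ˢ (Δˢ g)(k) z₁^(j-s) (z₂−z₁)^(k+s)`: expand in the other basis and back, and collect
terms by `s`. For `g k = Γ(k+c)/Γ(k+a)` the finite differences are again Gamma ratios,
`Δˢ g k = (c-a)(c-a-1)⋯(c-a-s+1) Γ(k+c)/Γ(k+a+s)`. Hence both factorization orders multiply the
`s`-th term by `C(j,s) (-1)ˢ (c-a)⋯(c-a-s+1) Γ(k+u₁-v₂)/Γ(k+s+v₁-u₂)`, with `c - a = u₂ - v₂` in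
both cases.
-/

open Finset MvPolynomial

theorem sum_neg_one_pow_mul_choose_mul_eq_fwdDiff_iter {R : Type*} [CommRing R] (g : ℕ → R)
    (s k : ℕ) :
    ∑ i ∈ range (s + 1), (-1) ^ i * s.choose i * g (k + i) = (-1) ^ s * (fwdDiff 1)^[s] g k := by
  rw [fwdDiff_iter_eq_sum_shift, mul_sum]
  refine sum_congr rfl fun i hi => ?_
  obtain ⟨d, rfl⟩ := Nat.exists_eq_add_of_le (Nat.lt_succ_iff.mp (mem_range.mp hi))
  simp only [zsmul_eq_mul, smul_eq_mul, mul_one, add_tsub_cancel_left, Int.cast_mul,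
    Int.cast_pow, Int.cast_neg, Int.cast_one, Int.cast_natCast, pow_add]
  ring_nf
  simp

section BinomBasis

variable {R S : Type*} [CommRing R] [CommRing S] [Algebra R S]

/-- `binomBasis (X 0) (X 1) j k = z₁ʲ(z₂−z₁)ᵏ` and `binomBasis (X 1) (X 0) j k = z₂ʲ(z₁−z₂)ᵏ`. -/
def binomBasis (a b : S) (j k : ℕ) : S := a ^ j * (b - a) ^ k

theorem binomBasis_eq_sum_swap (a b : S) (j k : ℕ) :
    binomBasis a b j k =
      ∑ i ∈ range (j + 1), ((-1) ^ k * j.choose i : R) • binomBasis b a (j - i) (k + i) := by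
  have ha : a = (a - b) + b := by ring
  have hba : b - a = -(a - b) := by ring
  rw [binomBasis, hba, neg_pow, ha, add_pow, sum_mul]
  refine sum_congr rfl fun i _ => ?_
  simp only [binomBasis, add_sub_cancel_right, Algebra.smul_def, map_mul, map_pow, map_neg,
    map_one, map_natCast, pow_add]
  ring

theorem pow_mul_pow_eq_sum_binomBasis (a b : S) (m n : ℕ) :
    a ^ m * b ^ n = ∑ i ∈ range (n + 1), n.choose i • binomBasis a b (m + (n - i)) i := by
  have hb : b = (b - a) + a := by ring
  conv_lhs => rw [hb, add_pow, mul_sum]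
  refine sum_congr rfl fun i _ => ?_
  rw [binomBasis, nsmul_eq_mul, pow_add]
  ring

theorem apply_binomBasis_eq_sum_fwdDiff {a b : S} {T : S →ₗ[R] S} {g : ℕ → R}
    (hT : ∀ j k, T (binomBasis b a j k) = g k • binomBasis b a j k) (j k : ℕ) :
    T (binomBasis a b j k) = ∑ s ∈ range (j + 1),
      (j.choose s * (-1) ^ s * (fwdDiff 1)^[s] g k : R) • binomBasis a b (j - s) (k + s) := by
  set F : ℕ → ℕ → S := fun i t =>
    ((-1) ^ k * j.choose i * g (k + i) * ((-1) ^ (k + i) * (j - i).choose t : R)) •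
      binomBasis a b (j - i - t) (k + i + t)
  have hsplit : T (binomBasis a b j k) = ∑ i ∈ range (j + 1), ∑ t ∈ range (j + 1 - i), F i t := by
    rw [binomBasis_eq_sum_swap (R := R), map_sum]
    refine sum_congr rfl fun i hi => ?_
    rw [map_smul, hT, binomBasis_eq_sum_swap (R := R), smul_sum, smul_sum,
      ← Nat.sub_add_comm (Nat.lt_succ_iff.mp (mem_range.mp hi))]
    refine sum_congr rfl fun t _ => ?_
    simp only [F, smul_smul, add_assoc, mul_assoc]
  have hdiag : ∀ s ∈ range (j + 1), ∀ i ∈ range (s + 1), F i (s - i) =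
      (j.choose s * ((-1) ^ i * s.choose i * g (k + i)) : R) • binomBasis a b (j - s) (k + s) := by
    intro s hs i hi
    have hsj := Nat.lt_succ_iff.mp (mem_range.mp hs)
    have his := Nat.lt_succ_iff.mp (mem_range.mp hi)
    have hchoose : (j.choose i * (j - i).choose (s - i) : R) = j.choose s * s.choose i := by
      rw [← Nat.cast_mul, ← Nat.cast_mul, Nat.choose_mul his]
    have hsign : ((-1) ^ k * (-1) ^ (k + i) : R) = (-1) ^ i := by
      rw [← pow_add, ← add_assoc, ← two_mul, pow_add, pow_mul, neg_one_sq, one_pow, one_mul]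
    simp only [F, show j - i - (s - i) = j - s by omega, show k + i + (s - i) = k + s by omega]
    congr 1
    linear_combination
      g (k + i) * (j.choose i * (j - i).choose (s - i) * hsign + (-1) ^ i * hchoose)
  rw [hsplit, ← sum_range_diag_flip]
  refine sum_congr rfl fun s hs => ?_
  rw [sum_congr rfl (hdiag s hs), ← sum_smul, ← mul_sum,
    sum_neg_one_pow_mul_choose_mul_eq_fwdDiff_iter, mul_assoc]

theorem apply_apply_binomBasis_eq_of_fwdDiff_iter {a b : S} {T₁ T₂ T₃ T₄ : S →ₗ[R] S}
    {f g h e : ℕ → R}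
    (h₁ : ∀ j k, T₁ (binomBasis a b j k) = f k • binomBasis a b j k)
    (h₂ : ∀ j k, T₂ (binomBasis b a j k) = g k • binomBasis b a j k)
    (h₃ : ∀ j k, T₃ (binomBasis b a j k) = h k • binomBasis b a j k)
    (h₄ : ∀ j k, T₄ (binomBasis a b j k) = e k • binomBasis a b j k)
    (hfg : ∀ s k, f (k + s) * (fwdDiff 1)^[s] g k = e k * (fwdDiff 1)^[s] h k) (j k : ℕ) :
    T₁ (T₂ (binomBasis a b j k)) = T₃ (T₄ (binomBasis a b j k)) := by
  rw [apply_binomBasis_eq_sum_fwdDiff h₂, h₄, map_smul, apply_binomBasis_eq_sum_fwdDiff h₃,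
    map_sum, smul_sum]
  refine sum_congr rfl fun s _ => ?_
  rw [map_smul, h₁, smul_smul, smul_smul]
  congr 1
  linear_combination (j.choose s * (-1) ^ s : R) * hfg s k

end BinomBasis

theorem MvPolynomial.linearMap_ext_binomBasis {R M : Type*} [CommRing R] [AddCommMonoid M]
    [Module R M] {T T' : MvPolynomial (Fin 2) R →ₗ[R] M}
    (h : ∀ j k, T (binomBasis (X 0) (X 1) j k) = T' (binomBasis (X 0) (X 1) j k)) : T = T' := by
  refine linearMap_ext fun d => LinearMap.ext_ring ?_
  simp only [LinearMap.comp_apply, monomial_fin_two, C_1, one_mul,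
    pow_mul_pow_eq_sum_binomBasis, map_sum, map_nsmul, h]

noncomputable def gammaRatio (c a : ℂ) (k : ℕ) : ℂ :=
  Complex.Gamma (k + c) / Complex.Gamma (k + a)

lemma natCast_add_ne_neg_natCast {a : ℂ} (ha : ∀ n : ℕ, a ≠ -n) (k n : ℕ) : k + a ≠ -n := by
  intro hk
  apply ha (n + k)
  push_cast
  linear_combination hk

theorem fwdDiff_gammaRatio {c a : ℂ} (hc : ∀ n : ℕ, c ≠ -n) (ha : ∀ n : ℕ, a ≠ -n) :
    fwdDiff 1 (gammaRatio c a) = (c - a) • gammaRatio c (a + 1) := by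
  funext k
  have hkc : (k : ℂ) + c ≠ 0 := by simpa using natCast_add_ne_neg_natCast hc k 0
  have hka : (k : ℂ) + a ≠ 0 := by simpa using natCast_add_ne_neg_natCast ha k 0
  have hΓ : Complex.Gamma (k + a) ≠ 0 := Complex.Gamma_ne_zero (natCast_add_ne_neg_natCast ha k)
  simp only [fwdDiff, gammaRatio, Pi.smul_apply, smul_eq_mul, Nat.cast_add, Nat.cast_one,
    add_right_comm _ (1 : ℂ), ← add_assoc, Complex.Gamma_add_one _ hkc, Complex.Gamma_add_one _ hka]
  field_simp
  ring

theorem fwdDiff_iter_gammaRatio {c a : ℂ} (hc : ∀ n : ℕ, c ≠ -n) (ha : ∀ n : ℕ, a ≠ -n)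
    (s : ℕ) : (fwdDiff 1)^[s] (gammaRatio c a) =
      (descPochhammer ℂ s).eval (c - a) • gammaRatio c (a + s) := by
  induction s with
  | zero => simp
  | succ s ih =>
    have has : ∀ n : ℕ, a + s ≠ -n := fun n => by
      simpa [add_comm] using natCast_add_ne_neg_natCast ha s n
    rw [Function.iterate_succ_apply', ih, fwdDiff_const_smul, fwdDiff_gammaRatio hc has,
      smul_smul, descPochhammer_succ_eval, Nat.cast_succ, add_assoc, sub_add_eq_sub_sub]

theorem gammaRatio_mul_fwdDiff_iter_gammaRatio {a b c d : ℂ} (ha : ∀ n : ℕ, a ≠ -n)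
    (hb : ∀ n : ℕ, b ≠ -n) (hc : ∀ n : ℕ, c ≠ -n) (hd : ∀ n : ℕ, d ≠ -n) (hcd : c - a = d - b)
    (s k : ℕ) :
    gammaRatio a b (k + s) * (fwdDiff 1)^[s] (gammaRatio c a) k =
      gammaRatio c d k * (fwdDiff 1)^[s] (gammaRatio d b) k := by
  have hΓa : Complex.Gamma (k + s + a) ≠ 0 := by
    simpa using Complex.Gamma_ne_zero (natCast_add_ne_neg_natCast ha (k + s))
  have hΓd : Complex.Gamma (k + d) ≠ 0 := Complex.Gamma_ne_zero (natCast_add_ne_neg_natCast hd k)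
  rw [fwdDiff_iter_gammaRatio hc ha, fwdDiff_iter_gammaRatio hd hb, hcd]
  simp only [gammaRatio, Pi.smul_apply, smul_eq_mul, Nat.cast_add, ← add_assoc,
    add_right_comm (k : ℂ) _ (s : ℂ)]
  field_simp

/-- The two factorization orders of the `sl(2)` R-operator coincide:
`D₂[u₁−u₂, v₁−u₂] ∘ D₁[u₁−v₂, u₁−u₂] = D₁[v₁−v₂, v₁−u₂] ∘ D₂[u₁−v₂, v₁−v₂]`,
where `D₂[α,β]` acts diagonally on the basis `z₁ʲ(z₂−z₁)ᵏ` with eigenvalue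
`Γ(k+α)/Γ(k+β)` and `D₁[α,β]` acts diagonally on the basis `z₂ʲ(z₁−z₂)ᵏ` with
eigenvalue `Γ(k+α)/Γ(k+β)`. -/
theorem R_factorization_orders_coincide (u₁ u₂ v₁ v₂ : ℂ)
    (h₁ : ∀ n : ℕ, u₁ - u₂ ≠ -(n : ℂ)) (h₂ : ∀ n : ℕ, v₁ - u₂ ≠ -(n : ℂ))
    (h₃ : ∀ n : ℕ, u₁ - v₂ ≠ -(n : ℂ)) (h₄ : ∀ n : ℕ, v₁ - v₂ ≠ -(n : ℂ))
    (A B C' E : Module.End ℂ (MvPolynomial (Fin 2) ℂ))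
    (hA : ∀ j k : ℕ,
      A ((X 0) ^ j * (X 1 - X 0) ^ k)
        = (Complex.Gamma ((k : ℂ) + (u₁ - u₂)) / Complex.Gamma ((k : ℂ) + (v₁ - u₂)))
            • ((X 0) ^ j * (X 1 - X 0) ^ k))
    (hB : ∀ j k : ℕ,
      B ((X 1) ^ j * (X 0 - X 1) ^ k)
        = (Complex.Gamma ((k : ℂ) + (u₁ - v₂)) / Complex.Gamma ((k : ℂ) + (u₁ - u₂)))
            • ((X 1) ^ j * (X 0 - X 1) ^ k))
    (hC : ∀ j k : ℕ,
      C' ((X 1) ^ j * (X 0 - X 1) ^ k)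
        = (Complex.Gamma ((k : ℂ) + (v₁ - v₂)) / Complex.Gamma ((k : ℂ) + (v₁ - u₂)))
            • ((X 1) ^ j * (X 0 - X 1) ^ k))
    (hE : ∀ j k : ℕ,
      E ((X 0) ^ j * (X 1 - X 0) ^ k)
        = (Complex.Gamma ((k : ℂ) + (u₁ - v₂)) / Complex.Gamma ((k : ℂ) + (v₁ - v₂)))
            • ((X 0) ^ j * (X 1 - X 0) ^ k)) :
    A * B = C' * E :=
  MvPolynomial.linearMap_ext_binomBasis <|
    apply_apply_binomBasis_eq_of_fwdDiff_iter (f := gammaRatio (u₁ - u₂) (v₁ - u₂))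
      (g := gammaRatio (u₁ - v₂) (u₁ - u₂)) (h := gammaRatio (v₁ - v₂) (v₁ - u₂))
      (e := gammaRatio (u₁ - v₂) (v₁ - v₂)) hA hB hC hE <|
    gammaRatio_mul_fwdDiff_iter_gammaRatio h₁ h₂ h₃ h₄ (by ring)
end

section
/- Let u₁, u₂, v₁, v₂ ∈ ℂ with u₁−v₂ ∉ ℤ_{≤0} and v₁−v₂ ∉ ℤ_{≤0}. Suppose R is a ℂ-linear endomorphism of ℂ[z₁,z₂] such that R commutes with multiplication by z₁ and R (L₁(u₁,u₂) + L₂(v₁,v₂)) = (L₁(v₁,u₂) + L₂(u₁,v₂)) R as 2×2 matrices of operators. Then there exists a constant c ∈ ℂ such that R = c · D₂[u₁−v₂, v₁−v₂], where D₂[α,β](z₁ʲ(z₂−z₁)ᵏ) = (Γ(k+α)/Γ(k+β)) z₁ʲ(z₂−z₁)ᵏ; that is, the defining system fixes the operator ℛ₁ up to overall normalization. -/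
open MvPolynomial

/-- Multiplication by `zᵢ` on `ℂ[z₁,z₂]` (indices `0,1` for `1,2`). -/
noncomputable def Zm (i : Fin 2) : Module.End ℂ (MvPolynomial (Fin 2) ℂ) :=
  LinearMap.mulLeft ℂ (X i)

/-- Partial derivative `∂ᵢ = ∂/∂zᵢ` on `ℂ[z₁,z₂]`. -/
noncomputable def Dm (i : Fin 2) : Module.End ℂ (MvPolynomial (Fin 2) ℂ) :=
  (pderiv i).toLinearMap

/-- The `sl(2)` Lax matrix `Lᵢ(a,b) = [[a + zᵢ∂ᵢ, −∂ᵢ], [zᵢ²∂ᵢ + (a−b)zᵢ, b − zᵢ∂ᵢ]]`. -/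
noncomputable def Lax (i : Fin 2) (a b : ℂ) :
    Matrix (Fin 2) (Fin 2) (Module.End ℂ (MvPolynomial (Fin 2) ℂ)) :=
  !![a • 1 + Zm i * Dm i, -Dm i;
     Zm i * Zm i * Dm i + (a - b) • Zm i, b • 1 - Zm i * Dm i]

/-- The scalar 2×2 matrix `R·Id`. -/
noncomputable def SM (R : Module.End ℂ (MvPolynomial (Fin 2) ℂ)) :
    Matrix (Fin 2) (Fin 2) (Module.End ℂ (MvPolynomial (Fin 2) ℂ)) :=
  Matrix.scalar (Fin 2) R

/-!
In the coordinates `w₁ = z₁`, `w₂ = z₂ − z₁` the basis `z₁ʲ(z₂−z₁)ᵏ` becomes the monomial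
basis, and `z₁(∂₁+∂₂)`, `(z₂−z₁)∂₂` become the Euler operators `w₁∂_{w₁}`, `w₂∂_{w₂}`, whose
joint eigenspaces are the lines spanned by monomials. The `(0,1)` and `(0,0)` entries of the
intertwining relation say that `R` commutes with `∂₁+∂₂` and with `z₁∂₁+z₂∂₂`; with
`[R, z₁] = 0` it commutes with both of these Euler operators, so `R` is diagonal on the basis
with an eigenvalue `c k` independent of `j`. The `(1,0)` entry, read at the coefficient of
`(z₂−z₁)^(k+1)` on `(z₂−z₁)^k`, is the recurrence `(k + v₁ − v₂) c (k+1) = (k + u₁ − v₂) c k`,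
solved by `Γ(k + u₁ − v₂) / Γ(k + v₁ − v₂)` and, away from the poles, only by its multiples.
-/

section EulerOperator

variable {σ R : Type*}

theorem MvPolynomial.coeff_X_mul_pderiv [CommSemiring R] (i : σ) (m : σ →₀ ℕ)
    (f : MvPolynomial σ R) : coeff m (X i * pderiv i f) = m i * coeff m f := by
  classical
  induction f using MvPolynomial.induction_on' with
  | monomial s a =>
    rw [X_mul_pderiv_monomial, coeff_smul, coeff_monomial]
    split_ifs with h <;> simp [h, nsmul_eq_mul]
  | add p q hp hq => simp only [mul_add, map_add, coeff_add, hp, hq]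

theorem MvPolynomial.eq_monomial_of_X_mul_pderiv_eq [CommRing R] [IsDomain R] [CharZero R]
    {d : σ →₀ ℕ} {f : MvPolynomial σ R} (h : ∀ i, X i * pderiv i f = (d i : R) • f) :
    f = monomial d (coeff d f) := by
  classical
  ext m
  rw [coeff_monomial]
  split_ifs with hdm
  · rw [hdm]
  by_contra hm
  refine hdm (Finsupp.ext fun i => ?_)
  have hi := congrArg (coeff m) (h i)
  rw [coeff_X_mul_pderiv, coeff_smul, smul_eq_mul] at hi
  exact_mod_cast (mul_right_cancel₀ hm hi).symm

end EulerOperator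

section Shear

variable {R : Type*} [CommRing R]

noncomputable def shear : MvPolynomial (Fin 2) R ≃ₐ[R] MvPolynomial (Fin 2) R :=
  AlgEquiv.ofAlgHom (aeval ![X 0, X 1 + X 0]) (aeval ![X 0, X 1 - X 0])
    (algHom_ext fun i => by fin_cases i <;> simp) (algHom_ext fun i => by fin_cases i <;> simp)

@[simp] theorem shear_X_zero : shear (X 0 : MvPolynomial (Fin 2) R) = X 0 := by simp [shear]

@[simp] theorem shear_X_one : shear (X 1 : MvPolynomial (Fin 2) R) = X 1 + X 0 := by simp [shear]

theorem pderiv_one_shear (f : MvPolynomial (Fin 2) R) :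
    pderiv 1 (shear f) = shear (pderiv 1 f) := by
  induction f using MvPolynomial.induction_on with
  | C a => rw [← algebraMap_eq, AlgEquiv.commutes]; simp
  | add p q hp hq => simp [hp, hq]
  | mul_X p i ih => fin_cases i <;> simp [ih]

theorem pderiv_zero_shear (f : MvPolynomial (Fin 2) R) :
    pderiv 0 (shear f) = shear (pderiv 0 f + pderiv 1 f) := by
  induction f using MvPolynomial.induction_on with
  | C a => rw [← algebraMap_eq, AlgEquiv.commutes]; simp
  | add p q hp hq => simp only [map_add, hp, hq]; abel
  | mul_X p i ih => fin_cases i <;> simp [ih] <;> ring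

theorem shear_X_zero_mul_pderiv_add (f : MvPolynomial (Fin 2) R) :
    shear (X 0 * (pderiv 0 f + pderiv 1 f)) = X 0 * pderiv 0 (shear f) := by
  rw [map_mul, shear_X_zero, pderiv_zero_shear]

theorem shear_sub_mul_pderiv_one (f : MvPolynomial (Fin 2) R) :
    shear ((X 1 - X 0) * pderiv 1 f) = X 1 * pderiv 1 (shear f) := by
  rw [map_mul, map_sub, shear_X_zero, shear_X_one, add_sub_cancel_right, pderiv_one_shear]

end Shear

section ShiftedMonomial

variable {R : Type*} [CommRing R]

noncomputable def shiftedMonomial (j k : ℕ) : MvPolynomial (Fin 2) R := X 0 ^ j * (X 1 - X 0) ^ k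

noncomputable def shiftedCoeff (j k : ℕ) : MvPolynomial (Fin 2) R →ₗ[R] R :=
  (lcoeff R (Finsupp.single 0 j + Finsupp.single 1 k)).comp shear.toLinearMap

theorem shear_shiftedMonomial (j k : ℕ) :
    shear (shiftedMonomial j k : MvPolynomial (Fin 2) R)
      = monomial (Finsupp.single 0 j + Finsupp.single 1 k) 1 := by
  rw [shiftedMonomial, map_mul, map_pow, map_pow, map_sub, shear_X_zero, shear_X_one,
    add_sub_cancel_right, X_pow_eq_monomial, X_pow_eq_monomial, monomial_mul, one_mul]

theorem X_zero_mul_shiftedMonomial (j k : ℕ) :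
    X 0 * shiftedMonomial j k = (shiftedMonomial (j + 1) k : MvPolynomial (Fin 2) R) := by
  simp only [shiftedMonomial]; ring

theorem X_one_mul_shiftedMonomial (j k : ℕ) :
    X 1 * shiftedMonomial j k
      = (shiftedMonomial j (k + 1) + shiftedMonomial (j + 1) k : MvPolynomial (Fin 2) R) := by
  simp only [shiftedMonomial]; ring

theorem shiftedCoeff_shiftedMonomial [Nontrivial R] (j k j' k' : ℕ) :
    shiftedCoeff j k (shiftedMonomial j' k' : MvPolynomial (Fin 2) R)
      = if j' = j ∧ k' = k then 1 else 0 := by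
  classical
  simp [shiftedCoeff, shear_shiftedMonomial, coeff_monomial, Finsupp.ext_iff, Fin.forall_fin_two]

theorem X_zero_mul_pderiv_add_shiftedMonomial (j k : ℕ) :
    X 0 * (pderiv 0 (shiftedMonomial j k) + pderiv 1 (shiftedMonomial j k))
      = (j : R) • (shiftedMonomial j k : MvPolynomial (Fin 2) R) := by
  apply shear.injective
  rw [shear_X_zero_mul_pderiv_add, map_smul, shear_shiftedMonomial, X_mul_pderiv_monomial]
  simp [Nat.cast_smul_eq_nsmul]

theorem sub_mul_pderiv_one_shiftedMonomial (j k : ℕ) :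
    (X 1 - X 0) * pderiv 1 (shiftedMonomial j k)
      = (k : R) • (shiftedMonomial j k : MvPolynomial (Fin 2) R) := by
  apply shear.injective
  rw [shear_sub_mul_pderiv_one, map_smul, shear_shiftedMonomial, X_mul_pderiv_monomial]
  simp [Nat.cast_smul_eq_nsmul]

theorem eq_shiftedCoeff_smul_shiftedMonomial [IsDomain R] [CharZero R] {j k : ℕ}
    {q : MvPolynomial (Fin 2) R} (hj : X 0 * (pderiv 0 q + pderiv 1 q) = (j : R) • q)
    (hk : (X 1 - X 0) * pderiv 1 q = (k : R) • q) :
    q = shiftedCoeff j k q • shiftedMonomial j k := by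
  apply shear.injective
  have hq : ∀ i, X i * pderiv i (shear q)
      = ((Finsupp.single 0 j + Finsupp.single 1 k : Fin 2 →₀ ℕ) i : R) • shear q := by
    simp only [Fin.forall_fin_two, ← shear_X_zero_mul_pderiv_add, ← shear_sub_mul_pderiv_one,
      hj, hk, map_smul]
    simp
  rw [map_smul, shear_shiftedMonomial, smul_monomial, smul_eq_mul, mul_one]
  exact eq_monomial_of_X_mul_pderiv_eq hq

end ShiftedMonomial

theorem mul_eq_mul_of_recurrence {K : Type*} [CommRing K] [IsDomain K] {a b f g : ℕ → K}
    (hb : ∀ k, b k ≠ 0) (hf : ∀ k, b k * f (k + 1) = a k * f k)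
    (hg : ∀ k, b k * g (k + 1) = a k * g k) (k : ℕ) : f k * g 0 = f 0 * g k := by
  induction k with
  | zero => rfl
  | succ k ih =>
    refine mul_left_cancel₀ (hb k) ?_
    linear_combination g 0 * hf k - f 0 * hg k + a k * ih

namespace Complex

theorem natCast_add_ne_neg_natCast {α : ℂ} (hα : ∀ n : ℕ, α ≠ -n) (k n : ℕ) :
    (k : ℂ) + α ≠ -n := fun h => hα (k + n) (by push_cast; linear_combination h)

theorem natCast_add_mul_Gamma_div_Gamma {α β : ℂ} (hα : ∀ n : ℕ, α ≠ -n)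
    (hβ : ∀ n : ℕ, β ≠ -n) (k : ℕ) :
    (k + β) * (Gamma ((k + 1 : ℕ) + α) / Gamma ((k + 1 : ℕ) + β))
      = (k + α) * (Gamma (k + α) / Gamma (k + β)) := by
  have hα' := natCast_add_ne_neg_natCast hα k 0
  have hβ' := natCast_add_ne_neg_natCast hβ k 0
  rw [Nat.cast_zero, neg_zero] at hα' hβ'
  rw [Nat.cast_succ, add_right_comm, add_right_comm _ 1, Gamma_add_one _ hα',
    Gamma_add_one _ hβ', ← mul_div_assoc, mul_div_mul_left _ _ hβ', mul_div_assoc]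

theorem exists_eq_mul_Gamma_div_Gamma_of_recurrence {α β : ℂ} (hα : ∀ n : ℕ, α ≠ -n)
    (hβ : ∀ n : ℕ, β ≠ -n) {c : ℕ → ℂ} (hc : ∀ k : ℕ, (k + β) * c (k + 1) = (k + α) * c k) :
    ∃ C : ℂ, ∀ k : ℕ, c k = C * (Gamma (k + α) / Gamma (k + β)) := by
  have hg0 : Gamma ((0 : ℕ) + α) / Gamma ((0 : ℕ) + β) ≠ 0 :=
    div_ne_zero (Gamma_ne_zero (natCast_add_ne_neg_natCast hα 0))
      (Gamma_ne_zero (natCast_add_ne_neg_natCast hβ 0))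
  refine ⟨c 0 / (Gamma ((0 : ℕ) + α) / Gamma ((0 : ℕ) + β)), fun k => ?_⟩
  rw [div_mul_eq_mul_div, eq_div_iff hg0]
  refine mul_eq_mul_of_recurrence (g := fun k => Gamma (k + α) / Gamma (k + β)) (fun k => ?_) hc
    (natCast_add_mul_Gamma_div_Gamma hα hβ) k
  simpa using natCast_add_ne_neg_natCast hβ k 0

end Complex

theorem Module.End.apply_eq_smul_of_commute {K M : Type*} [CommSemiring K] [AddCommMonoid M]
    [Module K M] {T A : Module.End K M} (hTA : Commute T A) {f : M} {μ : K}
    (hf : A f = μ • f) : A (T f) = μ • T f := by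
  rw [← Module.End.mul_apply, ← hTA.eq, Module.End.mul_apply, hf, map_smul]

section Operators

local notation "ℂ[z]" => MvPolynomial (Fin 2) ℂ

noncomputable def translation : Module.End ℂ ℂ[z] := Dm 0 + Dm 1

noncomputable def euler : Module.End ℂ ℂ[z] := Zm 0 * Dm 0 + Zm 1 * Dm 1

noncomputable def conformal : Module.End ℂ ℂ[z] := Zm 0 * Zm 0 * Dm 0 + Zm 1 * Zm 1 * Dm 1

noncomputable def eulerFst : Module.End ℂ ℂ[z] := Zm 0 * translation

noncomputable def eulerSnd : Module.End ℂ ℂ[z] := (Zm 1 - Zm 0) * Dm 1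

theorem Lax_zero_add_Lax_one (a b c d : ℂ) :
    Lax 0 a b + Lax 1 c d = !![(a + c) • 1 + euler, -translation;
      conformal + (a - b) • Zm 0 + (c - d) • Zm 1, (b + d) • 1 - euler] := by
  ext i j
  fin_cases i <;> fin_cases j <;> simp [Lax, euler, translation, conformal] <;> module

theorem SM_mul_eq_mul_SM_iff {R : Module.End ℂ ℂ[z]}
    {A B : Matrix (Fin 2) (Fin 2) (Module.End ℂ ℂ[z])} :
    SM R * A = B * SM R ↔ ∀ i j, R * A i j = B i j * R := by
  simp only [SM, Matrix.scalar_apply, ← Matrix.ext_iff, Matrix.diagonal_mul, Matrix.mul_diagonal]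

section Intertwiner

variable {R : Module.End ℂ ℂ[z]} {a b c d a' b' c' d' : ℂ}
  (h : SM R * (Lax 0 a b + Lax 1 c d) = (Lax 0 a' b' + Lax 1 c' d') * SM R)
include h

theorem commute_translation_of_intertwines : Commute R translation := by
  have h01 := SM_mul_eq_mul_SM_iff.mp h 0 1
  rw [Lax_zero_add_Lax_one, Lax_zero_add_Lax_one] at h01
  change Commute R (-translation) at h01
  exact Commute.neg_right_iff.mp h01

theorem commute_euler_of_intertwines (hac : a + c = a' + c') : Commute R euler := by
  have h00 := SM_mul_eq_mul_SM_iff.mp h 0 0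
  rw [Lax_zero_add_Lax_one, Lax_zero_add_Lax_one] at h00
  change R * ((a + c) • 1 + euler) = ((a' + c') • 1 + euler) * R at h00
  rwa [hac, mul_add, add_mul, mul_smul_comm, smul_mul_assoc, mul_one, one_mul,
    add_right_inj] at h00

theorem conformal_intertwines :
    R * (conformal + (a - b) • Zm 0 + (c - d) • Zm 1)
      = (conformal + (a' - b') • Zm 0 + (c' - d') • Zm 1) * R := by
  have h10 := SM_mul_eq_mul_SM_iff.mp h 1 0
  rwa [Lax_zero_add_Lax_one, Lax_zero_add_Lax_one] at h10

end Intertwiner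

@[simp] theorem Zm_apply (i : Fin 2) (f : ℂ[z]) : Zm i f = X i * f := rfl

@[simp] theorem Dm_apply (i : Fin 2) (f : ℂ[z]) : Dm i f = pderiv i f := rfl

theorem euler_eq_eulerFst_add_eulerSnd : euler = eulerFst + eulerSnd := by
  simp only [euler, eulerFst, eulerSnd, translation]
  rw [mul_add, sub_mul]
  abel

theorem conformal_eq_mul_eulerFst_add_mul_eulerSnd : conformal = Zm 0 * eulerFst + (Zm 1 + Zm 0) * eulerSnd := by
  refine LinearMap.ext fun f => ?_
  simp [conformal, eulerFst, eulerSnd, translation]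
  ring

theorem eulerFst_shiftedMonomial (j k : ℕ) :
    eulerFst (shiftedMonomial j k) = (j : ℂ) • shiftedMonomial j k := by
  simpa [eulerFst, translation] using X_zero_mul_pderiv_add_shiftedMonomial j k

theorem eulerSnd_shiftedMonomial (j k : ℕ) :
    eulerSnd (shiftedMonomial j k) = (k : ℂ) • shiftedMonomial j k := by
  simpa [eulerSnd, sub_mul] using sub_mul_pderiv_one_shiftedMonomial j k

theorem apply_shiftedMonomial_eq_smul {T : Module.End ℂ ℂ[z]} (hz : Commute T (Zm 0))
    (hT : Commute T translation) (hE : Commute T euler) (j k : ℕ) :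
    T (shiftedMonomial j k)
      = shiftedCoeff 0 k (T (shiftedMonomial 0 k)) • shiftedMonomial j k := by
  have hFst : Commute T eulerFst := hz.mul_right hT
  have hSnd : Commute T eulerSnd := by
    simpa [euler_eq_eulerFst_add_eulerSnd] using hE.sub_right hFst
  induction j with
  | zero =>
    refine eq_shiftedCoeff_smul_shiftedMonomial ?_ ?_
    · simpa [eulerFst, translation] using
        Module.End.apply_eq_smul_of_commute hFst (eulerFst_shiftedMonomial 0 k)
    · simpa [eulerSnd, sub_mul] using
        Module.End.apply_eq_smul_of_commute hSnd (eulerSnd_shiftedMonomial 0 k)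
  | succ j ih =>
    rw [← X_zero_mul_shiftedMonomial, ← Zm_apply, ← Module.End.mul_apply, hz.eq,
      Module.End.mul_apply, ih, map_smul, Zm_apply, X_zero_mul_shiftedMonomial]

theorem recurrence_of_conformal_intertwines {T : Module.End ℂ ℂ[z]} {a b a' b' : ℂ} {c : ℕ → ℂ}
    (hK : T * (conformal + a • Zm 0 + b • Zm 1) = (conformal + a' • Zm 0 + b' • Zm 1) * T)
    (hT : ∀ j k, T (shiftedMonomial j k) = c k • shiftedMonomial j k) (k : ℕ) :
    (k + b) * c (k + 1) = (k + b') * c k := by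
  have hk := congrArg (fun S => shiftedCoeff 0 (k + 1) (S (shiftedMonomial 0 k))) hK
  simp only [conformal_eq_mul_eulerFst_add_mul_eulerSnd, Module.End.mul_apply, LinearMap.add_apply, LinearMap.smul_apply,
    eulerFst_shiftedMonomial, eulerSnd_shiftedMonomial, Zm_apply, X_zero_mul_shiftedMonomial,
    X_one_mul_shiftedMonomial, hT, map_add, map_smul, smul_add, shiftedCoeff_shiftedMonomial,
    CharP.cast_eq_zero, zero_smul, mul_zero, zero_add, add_zero,
    Nat.left_eq_add, one_ne_zero, and_self, ↓reduceIte, smul_eq_mul, mul_one] at hk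
  linear_combination hk

end Operators

/-- If `R` commutes with multiplication by `z₁` and satisfies
`R (L₁(u₁,u₂) + L₂(v₁,v₂)) = (L₁(v₁,u₂) + L₂(u₁,v₂)) R`, then `R` is a constant multiple
of `D₂[u₁−v₂, v₁−v₂]`, i.e. `∃ c, R = c·D₂[u₁−v₂,v₁−v₂]`, equality being recorded on the
basis `z₁ʲ(z₂−z₁)ᵏ` of `ℂ[z₁,z₂]`: the defining system fixes `ℛ₁` up to normalization. -/
theorem R1_uniqueness (u₁ u₂ v₁ v₂ : ℂ)
    (h₁ : ∀ n : ℕ, u₁ - v₂ ≠ -(n : ℂ)) (h₂ : ∀ n : ℕ, v₁ - v₂ ≠ -(n : ℂ))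
    (R : Module.End ℂ (MvPolynomial (Fin 2) ℂ))
    (hz : R * Zm 0 = Zm 0 * R)
    (hL : SM R * (Lax 0 u₁ u₂ + Lax 1 v₁ v₂) = (Lax 0 v₁ u₂ + Lax 1 u₁ v₂) * SM R) :
    ∃ c : ℂ, ∀ j k : ℕ,
      R ((X 0) ^ j * (X 1 - X 0) ^ k)
        = (c * (Complex.Gamma ((k : ℂ) + (u₁ - v₂)) / Complex.Gamma ((k : ℂ) + (v₁ - v₂))))
            • ((X 0) ^ j * (X 1 - X 0) ^ k) := by
  have hR := apply_shiftedMonomial_eq_smul hz (commute_translation_of_intertwines hL)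
    (commute_euler_of_intertwines hL (add_comm u₁ v₁))
  obtain ⟨c, hc⟩ := Complex.exists_eq_mul_Gamma_div_Gamma_of_recurrence h₁ h₂
    (recurrence_of_conformal_intertwines (conformal_intertwines hL) hR)
  exact ⟨c, fun j k => hc k ▸ hR j k⟩
end
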